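/- arXiv:2405.10146 — 3 statements merged into one kernel-verified Lean document; each statement's English description precedes it below -/
import Mathlib

section
/- Kalman gain Lipschitz bound: Let Γ ∈ ℝ^{k×k} be symmetric positive definite with smallest eigenvalue γ_min > 0 and let H ∈ ℝ^{k×d}. Let θ₁ ∈ ℝ^{d×d} be symmetric positive semi-definite and θ₂ ∈ ℝ^{d×d} symmetric. Then the Kalman gains K(θ_i) := θ_i·Hᵀ·(H·I⁺(θ_i)·Hᵀ + Γ)^{−1} satisfy |K(θ₁) − K(θ₂)| ≤ (|H|/γ_min)·(1 + 2·|K(θ₁)|·|H|)·|θ₁ − θ₂|, where |·| denotes the spectral norm. -/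
open scoped Matrix Matrix.Norms.L2Operator

noncomputable section

/-- `I⁺(M) = Σ_{λ_k ≥ 0} λ_k q_k q_kᵀ`: the positive part of a symmetric matrix `M`, obtained by
zeroing out the negative eigenvalues in an orthonormal eigendecomposition (spectral theorem);
junk value `0` for non-symmetric `M`. -/
def Iplus {d : ℕ} (M : Matrix (Fin d) (Fin d) ℝ) : Matrix (Fin d) (Fin d) ℝ :=
  if h : M.IsHermitian then
    ∑ k : Fin d, if 0 ≤ h.eigenvalues k then
      h.eigenvalues k • Matrix.vecMulVec (fun i => h.eigenvectorBasis k i)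
        (fun i => h.eigenvectorBasis k i)
    else 0
  else 0

/-- The Kalman gain `K(θ) = θ Hᵀ (H I⁺(θ) Hᵀ + Γ)⁻¹`. -/
def kalmanGain {d k : ℕ} (H : Matrix (Fin k) (Fin d) ℝ) (Γ : Matrix (Fin k) (Fin k) ℝ)
    (θ : Matrix (Fin d) (Fin d) ℝ) : Matrix (Fin d) (Fin k) ℝ :=
  θ * Hᵀ * (H * Iplus θ * Hᵀ + Γ)⁻¹

section KGauxSection

open scoped InnerProductSpace
open Matrix

namespace KGaux

variable {m n : ℕ} {M : Matrix (Fin n) (Fin n) ℝ}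

lemma dot_eq_inner (x y : EuclideanSpace ℝ (Fin n)) :
    ⟪x, y⟫_ℝ = (WithLp.equiv 2 _ x) ⬝ᵥ (WithLp.equiv 2 _ y) := by
  simp [PiLp.inner_apply, dotProduct, RCLike.inner_apply, conj_trivial, mul_comm]

lemma L_le (A : Matrix (Fin m) (Fin n) ℝ) (x : EuclideanSpace ℝ (Fin n)) :
    ‖toEuclideanLin A x‖ ≤ ‖A‖ * ‖x‖ := by
  rw [Matrix.l2_opNorm_def]
  exact ((Matrix.toEuclideanLin.trans LinearMap.toContinuousLinearMap) A).le_opNorm x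

lemma norm_le_of_forall (A : Matrix (Fin m) (Fin n) ℝ) {c : ℝ} (hc : 0 ≤ c)
    (h : ∀ x : EuclideanSpace ℝ (Fin n), ‖toEuclideanLin A x‖ ≤ c * ‖x‖) : ‖A‖ ≤ c := by
  rw [Matrix.l2_opNorm_def]
  exact ContinuousLinearMap.opNorm_le_bound _ hc h

lemma L_L (A : Matrix (Fin m) (Fin n) ℝ) (B : Matrix (Fin n) (Fin n) ℝ)
    (x : EuclideanSpace ℝ (Fin n)) :
    toEuclideanLin A (toEuclideanLin B x) = toEuclideanLin (A * B) x := by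
  simp [Matrix.toEuclideanLin_apply, Matrix.mulVec_mulVec]

lemma L_one (x : EuclideanSpace ℝ (Fin n)) :
    toEuclideanLin (1 : Matrix (Fin n) (Fin n) ℝ) x = x := by
  simp [Matrix.toEuclideanLin_apply]

lemma L_basis (hM : M.IsHermitian) (k : Fin n) :
    toEuclideanLin M (hM.eigenvectorBasis k) = hM.eigenvalues k • hM.eigenvectorBasis k := by
  apply (WithLp.equiv 2 _).injective
  simp only [toEuclideanLin_apply, Equiv.apply_symm_apply]
  rw [show (WithLp.equiv 2 (Fin n → ℝ)) (WithLp.toLp 2 (M *ᵥ (hM.eigenvectorBasis k).ofLp))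
      = M *ᵥ ⇑(hM.eigenvectorBasis k) from rfl,
    hM.mulVec_eigenvectorBasis]
  rfl

lemma L_spectral (hM : M.IsHermitian) (x : EuclideanSpace ℝ (Fin n)) :
    toEuclideanLin M x
      = ∑ k, (hM.eigenvalues k * ⟪hM.eigenvectorBasis k, x⟫_ℝ) • hM.eigenvectorBasis k := by
  conv_lhs => rw [← hM.eigenvectorBasis.sum_repr' x, map_sum]
  refine Finset.sum_congr rfl fun k _ => ?_
  rw [_root_.map_smul, L_basis hM k, smul_smul, mul_comm]

lemma vecMulVec_mulVec (a b x : Fin n → ℝ) :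
    Matrix.vecMulVec a b *ᵥ x = (b ⬝ᵥ x) • a := by
  funext i
  simp [Matrix.mulVec, Matrix.vecMulVec_apply, dotProduct, Finset.sum_mul,
    Finset.mul_sum, mul_assoc, mul_comm, mul_left_comm]

lemma L_vecMulVec (v x : EuclideanSpace ℝ (Fin n)) :
    toEuclideanLin (Matrix.vecMulVec (fun i => v i) (fun i => v i)) x = ⟪v, x⟫_ℝ • v := by
  apply (WithLp.equiv 2 _).injective
  simp only [toEuclideanLin_apply, Equiv.apply_symm_apply]
  rw [vecMulVec_mulVec, dot_eq_inner]
  rfl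

lemma L_Iplus (hM : M.IsHermitian) (x : EuclideanSpace ℝ (Fin n)) :
    toEuclideanLin (Iplus M) x
      = ∑ k, if 0 ≤ hM.eigenvalues k then
          (hM.eigenvalues k * ⟪hM.eigenvectorBasis k, x⟫_ℝ) • hM.eigenvectorBasis k else 0 := by
  rw [Iplus, dif_pos hM, map_sum, LinearMap.sum_apply]
  refine Finset.sum_congr rfl fun k _ => ?_
  by_cases h : 0 ≤ hM.eigenvalues k
  · rw [if_pos h, if_pos h, _root_.map_smul, LinearMap.smul_apply, L_vecMulVec, smul_smul,
      mul_comm]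
  · rw [if_neg h, if_neg h, map_zero, LinearMap.zero_apply]

lemma parseval (b : OrthonormalBasis (Fin n) ℝ (EuclideanSpace ℝ (Fin n)))
    (x : EuclideanSpace ℝ (Fin n)) : ∑ k, ⟪b k, x⟫_ℝ ^ 2 = ‖x‖ ^ 2 := by
  rw [← b.repr.norm_map x, EuclideanSpace.norm_eq]
  rw [Real.sq_sqrt (by positivity)]
  refine Finset.sum_congr rfl fun k _ => ?_
  rw [← b.repr_apply_apply, Real.norm_eq_abs, sq_abs]

lemma norm_sum_smul (b : OrthonormalBasis (Fin n) ℝ (EuclideanSpace ℝ (Fin n)))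
    (c : Fin n → ℝ) : ‖∑ k, c k • b k‖ ^ 2 = ∑ k, c k ^ 2 := by
  rw [← parseval b]
  refine Finset.sum_congr rfl fun k _ => ?_
  rw [inner_sum]
  simp only [real_inner_smul_right, orthonormal_iff_ite.mp b.orthonormal, mul_ite, mul_one,
    mul_zero, Finset.sum_ite_eq, Finset.mem_univ, if_true]

lemma inner_L (A : Matrix (Fin n) (Fin n) ℝ) (x : EuclideanSpace ℝ (Fin n)) :
    ⟪x, toEuclideanLin A x⟫_ℝ = (WithLp.equiv 2 _ x) ⬝ᵥ (A *ᵥ (WithLp.equiv 2 _ x)) := by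
  rw [dot_eq_inner, toEuclideanLin_apply]
  rfl

lemma psd_inner {A : Matrix (Fin n) (Fin n) ℝ} (hA : A.PosSemidef)
    (x : EuclideanSpace ℝ (Fin n)) : 0 ≤ ⟪x, toEuclideanLin A x⟫_ℝ := by
  rw [inner_L]
  simpa using hA.dotProduct_mulVec_nonneg (WithLp.equiv 2 _ x)

lemma Iplus_isHermitian (M : Matrix (Fin n) (Fin n) ℝ) : (Iplus M).IsHermitian := by
  unfold Iplus
  split
  · ext i j
    simp only [conjTranspose_apply, star_trivial, Matrix.sum_apply]
    refine Finset.sum_congr rfl fun k _ => ?_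
    split
    · simp only [Matrix.smul_apply, Matrix.vecMulVec_apply, smul_eq_mul]; ring
    · rfl
  · simp [Matrix.isHermitian_zero]

/-- quadratic form of a hermitian matrix via eigen-expansion -/
lemma quad_spectral (hM : M.IsHermitian) (x : EuclideanSpace ℝ (Fin n)) :
    ⟪x, toEuclideanLin M x⟫_ℝ
      = ∑ k, hM.eigenvalues k * ⟪hM.eigenvectorBasis k, x⟫_ℝ ^ 2 := by
  rw [L_spectral hM, inner_sum]
  refine Finset.sum_congr rfl fun k _ => ?_
  rw [real_inner_smul_right, real_inner_comm]
  ring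

lemma quad_Iplus (hM : M.IsHermitian) (x : EuclideanSpace ℝ (Fin n)) :
    ⟪x, toEuclideanLin (Iplus M) x⟫_ℝ
      = ∑ k, if 0 ≤ hM.eigenvalues k then
          hM.eigenvalues k * ⟪hM.eigenvectorBasis k, x⟫_ℝ ^ 2 else 0 := by
  rw [L_Iplus hM, inner_sum]
  refine Finset.sum_congr rfl fun k _ => ?_
  by_cases h : 0 ≤ hM.eigenvalues k
  · rw [if_pos h, if_pos h, real_inner_smul_right, real_inner_comm]; ring
  · rw [if_neg h, if_neg h, inner_zero_right]

lemma Iplus_posSemidef (M : Matrix (Fin n) (Fin n) ℝ) : (Iplus M).PosSemidef := by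
  refine Matrix.PosSemidef.of_dotProduct_mulVec_nonneg (Iplus_isHermitian M) fun x => ?_
  by_cases hM : M.IsHermitian
  · have h := quad_Iplus hM ((WithLp.equiv 2 (Fin n → ℝ)).symm x)
    rw [inner_L, Equiv.apply_symm_apply] at h
    rw [star_trivial, h]
    refine Finset.sum_nonneg fun k _ => ?_
    split
    · positivity
    · exact le_refl 0
  · rw [Iplus, dif_neg hM]; simp

lemma norm_transpose (A : Matrix (Fin m) (Fin n) ℝ) : ‖Aᵀ‖ = ‖A‖ := by
  rw [← Matrix.conjTranspose_eq_transpose_of_trivial, Matrix.l2_opNorm_conjTranspose]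

lemma psd_HAHT {A : Matrix (Fin n) (Fin n) ℝ} (hA : A.PosSemidef)
    (H : Matrix (Fin m) (Fin n) ℝ) : (H * A * Hᵀ).PosSemidef := by
  have h := hA.mul_mul_conjTranspose_same H
  rwa [Matrix.conjTranspose_eq_transpose_of_trivial] at h

lemma inv_norm_le {S : Matrix (Fin n) (Fin n) ℝ} (hS : S.PosDef) {γ : ℝ} (hγ : 0 < γ)
    (hq : ∀ y : EuclideanSpace ℝ (Fin n), γ * ‖y‖ ^ 2 ≤ ⟪y, toEuclideanLin S y⟫_ℝ) :
    ‖S⁻¹‖ ≤ 1 / γ := by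
  apply norm_le_of_forall _ (by positivity)
  intro x
  set y := toEuclideanLin S⁻¹ x with hy
  have hx : toEuclideanLin S y = x := by
    rw [hy, L_L, Matrix.mul_nonsing_inv _ hS.det_pos.ne'.isUnit, L_one]
  have key : γ * ‖y‖ ≤ ‖x‖ := by
    rcases eq_or_ne y 0 with h0 | h0
    · simp [h0]
    · have h1 := hq y
      rw [hx] at h1
      have h2 : ⟪y, x⟫_ℝ ≤ ‖y‖ * ‖x‖ := real_inner_le_norm y x
      have h3 : 0 < ‖y‖ := norm_pos_iff.mpr h0
      nlinarith
  have h4 : 0 < γ := hγ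
  rw [div_mul_eq_mul_div, le_div_iff₀ h4]
  nlinarith [norm_nonneg x]


lemma Iplus_eq_self {θ : Matrix (Fin n) (Fin n) ℝ} (hθ : θ.PosSemidef) : Iplus θ = θ := by
  apply Matrix.toEuclideanLin.injective
  apply LinearMap.ext
  intro x
  rw [L_Iplus hθ.1 x, L_spectral hθ.1 x]
  exact Finset.sum_congr rfl fun k _ => if_pos (hθ.eigenvalues_nonneg k)

lemma eig_lb {θ₁ θ₂ : Matrix (Fin n) (Fin n) ℝ} (hθ₁ : θ₁.PosSemidef) (hθ₂ : θ₂.IsHermitian)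
    (k : Fin n) : -‖θ₁ - θ₂‖ ≤ hθ₂.eigenvalues k := by
  set v := hθ₂.eigenvectorBasis k with hv
  have hnv : ‖v‖ = 1 := hθ₂.eigenvectorBasis.orthonormal.1 k
  have h1 : ⟪v, toEuclideanLin θ₂ v⟫_ℝ = hθ₂.eigenvalues k := by
    rw [L_basis hθ₂ k, real_inner_smul_right, real_inner_self_eq_norm_sq, hnv]
    ring
  have h2 : toEuclideanLin θ₂ v = toEuclideanLin θ₁ v - toEuclideanLin (θ₁ - θ₂) v := by
    rw [map_sub, LinearMap.sub_apply]
    abel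
  have h3 : 0 ≤ ⟪v, toEuclideanLin θ₁ v⟫_ℝ := psd_inner hθ₁ v
  have h4 : ⟪v, toEuclideanLin (θ₁ - θ₂) v⟫_ℝ ≤ ‖θ₁ - θ₂‖ := by
    calc ⟪v, toEuclideanLin (θ₁ - θ₂) v⟫_ℝ ≤ ‖v‖ * ‖toEuclideanLin (θ₁ - θ₂) v‖ :=
          real_inner_le_norm _ _
      _ ≤ ‖v‖ * (‖θ₁ - θ₂‖ * ‖v‖) := by
          gcongr; exact L_le _ _
      _ = ‖θ₁ - θ₂‖ := by rw [hnv]; ring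
  rw [← h1, h2, inner_sub_right]
  linarith

lemma Iplus_sub_bound {θ₁ θ₂ : Matrix (Fin n) (Fin n) ℝ} (hθ₁ : θ₁.PosSemidef)
    (hθ₂ : θ₂.IsHermitian) : ‖Iplus θ₂ - θ₂‖ ≤ ‖θ₁ - θ₂‖ := by
  set mM := ‖θ₁ - θ₂‖ with hm
  apply norm_le_of_forall _ (norm_nonneg _)
  intro x
  set b := hθ₂.eigenvectorBasis with hb
  set c : Fin n → ℝ :=
    fun k => (if 0 ≤ hθ₂.eigenvalues k then 0 else -hθ₂.eigenvalues k) * ⟪b k, x⟫_ℝ with hc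
  have hL : toEuclideanLin (Iplus θ₂ - θ₂) x = ∑ k, c k • b k := by
    rw [map_sub, LinearMap.sub_apply, L_Iplus hθ₂ x, L_spectral hθ₂ x, ← Finset.sum_sub_distrib]
    refine Finset.sum_congr rfl fun k _ => ?_
    by_cases h : 0 ≤ hθ₂.eigenvalues k
    · rw [if_pos h, sub_self, hc]
      simp [h]
    · rw [if_neg h, hc]
      simp only [if_neg h]
      rw [zero_sub, ← neg_smul]
      ring_nf
      rfl
  have hsq : ‖toEuclideanLin (Iplus θ₂ - θ₂) x‖ ^ 2 ≤ (mM * ‖x‖) ^ 2 := by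
    rw [hL, norm_sum_smul]
    calc ∑ k, c k ^ 2 ≤ ∑ k, mM ^ 2 * ⟪b k, x⟫_ℝ ^ 2 := by
          refine Finset.sum_le_sum fun k _ => ?_
          rw [hc, mul_pow]
          have hk : (if 0 ≤ hθ₂.eigenvalues k then 0 else -hθ₂.eigenvalues k) ^ 2 ≤ mM ^ 2 := by
            split
            · simpa using sq_nonneg mM
            · have := eig_lb hθ₁ hθ₂ k
              have hmn : 0 ≤ mM := norm_nonneg _
              nlinarith
          nlinarith [sq_nonneg (⟪b k, x⟫_ℝ), sq_nonneg (c k)]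
      _ = mM ^ 2 * ‖x‖ ^ 2 := by rw [← Finset.mul_sum, parseval]
      _ = (mM * ‖x‖) ^ 2 := by ring
  have h0 : 0 ≤ mM * ‖x‖ := by positivity
  exact le_of_pow_le_pow_left₀ two_ne_zero h0 hsq

end KGaux

open KGaux

/-- **Kalman gain Lipschitz bound**: for symmetric positive definite `Γ` with smallest
eigenvalue `γ_min > 0`, symmetric positive semi-definite `θ₁`, and symmetric `θ₂`,
`|K(θ₁) − K(θ₂)| ≤ (|H|/γ_min)(1 + 2 |K(θ₁)| |H|) |θ₁ − θ₂|` in spectral norm. -/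
theorem kalmanGain_lipschitz_bound {d k : ℕ}
    (Γ : Matrix (Fin k) (Fin k) ℝ) (hΓ : Γ.PosDef)
    (γmin : ℝ) (hγ : 0 < γmin)
    (hlb : ∀ i, γmin ≤ hΓ.1.eigenvalues i) (hmem : ∃ i, hΓ.1.eigenvalues i = γmin)
    (H : Matrix (Fin k) (Fin d) ℝ)
    (θ₁ θ₂ : Matrix (Fin d) (Fin d) ℝ) (hθ₁ : θ₁.PosSemidef) (hθ₂ : θ₂.IsHermitian) :
    ‖kalmanGain H Γ θ₁ - kalmanGain H Γ θ₂‖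
      ≤ ‖H‖ / γmin * (1 + 2 * ‖kalmanGain H Γ θ₁‖ * ‖H‖) * ‖θ₁ - θ₂‖ := by
  classical
  set S₁ : Matrix (Fin k) (Fin k) ℝ := H * Iplus θ₁ * Hᵀ + Γ with hS₁def
  set S₂ : Matrix (Fin k) (Fin k) ℝ := H * Iplus θ₂ * Hᵀ + Γ with hS₂def
  have hpsd₁ : (H * Iplus θ₁ * Hᵀ).PosSemidef := psd_HAHT (Iplus_posSemidef θ₁) H
  have hpsd₂ : (H * Iplus θ₂ * Hᵀ).PosSemidef := psd_HAHT (Iplus_posSemidef θ₂) H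
  have hP1 : S₁.PosDef := by
    have h := hΓ.add_posSemidef hpsd₁
    rwa [add_comm, ← hS₁def] at h
  have hP2 : S₂.PosDef := by
    have h := hΓ.add_posSemidef hpsd₂
    rwa [add_comm, ← hS₂def] at h
  have hinv1l : S₁⁻¹ * S₁ = 1 := Matrix.nonsing_inv_mul _ hP1.det_pos.ne'.isUnit
  have hinv2r : S₂ * S₂⁻¹ = 1 := Matrix.mul_nonsing_inv _ hP2.det_pos.ne'.isUnit
  -- norm bound on `S₂⁻¹`
  have hq : ∀ y : EuclideanSpace ℝ (Fin k), γmin * ‖y‖ ^ 2 ≤ ⟪y, Matrix.toEuclideanLin S₂ y⟫_ℝ := by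
    intro y
    rw [hS₂def, map_add, LinearMap.add_apply, inner_add_right]
    have hA := psd_inner hpsd₂ y
    have hΓq : γmin * ‖y‖ ^ 2 ≤ ⟪y, Matrix.toEuclideanLin Γ y⟫_ℝ := by
      rw [quad_spectral hΓ.1 y, ← parseval hΓ.1.eigenvectorBasis y, Finset.mul_sum]
      refine Finset.sum_le_sum fun i _ => ?_
      have h1 := hlb i
      nlinarith [sq_nonneg (⟪hΓ.1.eigenvectorBasis i, y⟫_ℝ)]
    linarith
  have hSinv : ‖S₂⁻¹‖ ≤ 1 / γmin := inv_norm_le hP2 hγ hq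
  -- bound on the difference of the projections
  have hIdiff : ‖Iplus θ₂ - Iplus θ₁‖ ≤ 2 * ‖θ₁ - θ₂‖ := by
    have h1 : Iplus θ₂ - Iplus θ₁ = (Iplus θ₂ - θ₂) + (θ₂ - θ₁) := by
      rw [Iplus_eq_self hθ₁]; abel
    rw [h1]
    calc ‖(Iplus θ₂ - θ₂) + (θ₂ - θ₁)‖ ≤ ‖Iplus θ₂ - θ₂‖ + ‖θ₂ - θ₁‖ := norm_add_le _ _
      _ ≤ ‖θ₁ - θ₂‖ + ‖θ₁ - θ₂‖ := by
          gcongr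
          · exact Iplus_sub_bound hθ₁ hθ₂
          · exact (norm_sub_rev θ₂ θ₁).le
      _ = 2 * ‖θ₁ - θ₂‖ := by ring
  -- the key algebraic identity
  have hKdiff : kalmanGain H Γ θ₁ - kalmanGain H Γ θ₂
      = (θ₁ - θ₂) * Hᵀ * S₂⁻¹
        + kalmanGain H Γ θ₁ * (H * (Iplus θ₂ - Iplus θ₁) * Hᵀ) * S₂⁻¹ := by
    have hSS : H * (Iplus θ₂ - Iplus θ₁) * Hᵀ = S₂ - S₁ := by
      rw [hS₂def, hS₁def, Matrix.mul_sub, Matrix.sub_mul]; abel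
    have hmid : θ₁ * Hᵀ * S₁⁻¹ * (S₂ - S₁) * S₂⁻¹
        = θ₁ * Hᵀ * S₁⁻¹ - θ₁ * Hᵀ * S₂⁻¹ := by
      have e1 : θ₁ * Hᵀ * S₁⁻¹ * S₂ * S₂⁻¹ = θ₁ * Hᵀ * S₁⁻¹ := by
        rw [Matrix.mul_assoc (θ₁ * Hᵀ * S₁⁻¹) S₂ S₂⁻¹, hinv2r, Matrix.mul_one]
      have e2 : θ₁ * Hᵀ * S₁⁻¹ * S₁ * S₂⁻¹ = θ₁ * Hᵀ * S₂⁻¹ := by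
        rw [Matrix.mul_assoc (θ₁ * Hᵀ) S₁⁻¹ S₁, hinv1l, Matrix.mul_one]
      calc θ₁ * Hᵀ * S₁⁻¹ * (S₂ - S₁) * S₂⁻¹
          = θ₁ * Hᵀ * S₁⁻¹ * S₂ * S₂⁻¹ - θ₁ * Hᵀ * S₁⁻¹ * S₁ * S₂⁻¹ := by
            rw [Matrix.mul_sub, Matrix.sub_mul]
        _ = θ₁ * Hᵀ * S₁⁻¹ - θ₁ * Hᵀ * S₂⁻¹ := by rw [e1, e2]
    simp only [kalmanGain]
    rw [← hS₁def, ← hS₂def, hSS, hmid, Matrix.sub_mul, Matrix.sub_mul]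
    abel
  -- assembling the norm bounds
  have t1 : ‖(θ₁ - θ₂) * Hᵀ * S₂⁻¹‖ ≤ ‖θ₁ - θ₂‖ * ‖H‖ * (1 / γmin) := by
    calc ‖(θ₁ - θ₂) * Hᵀ * S₂⁻¹‖ ≤ ‖(θ₁ - θ₂) * Hᵀ‖ * ‖S₂⁻¹‖ := Matrix.l2_opNorm_mul _ _
      _ ≤ (‖θ₁ - θ₂‖ * ‖Hᵀ‖) * (1 / γmin) := by
          apply mul_le_mul (Matrix.l2_opNorm_mul _ _) hSinv (norm_nonneg _) (by positivity)
      _ = ‖θ₁ - θ₂‖ * ‖H‖ * (1 / γmin) := by rw [norm_transpose]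
  have t2 : ‖kalmanGain H Γ θ₁ * (H * (Iplus θ₂ - Iplus θ₁) * Hᵀ) * S₂⁻¹‖
      ≤ ‖kalmanGain H Γ θ₁‖ * (‖H‖ * (2 * ‖θ₁ - θ₂‖) * ‖H‖) * (1 / γmin) := by
    have hmidn : ‖H * (Iplus θ₂ - Iplus θ₁) * Hᵀ‖ ≤ ‖H‖ * (2 * ‖θ₁ - θ₂‖) * ‖H‖ := by
      calc ‖H * (Iplus θ₂ - Iplus θ₁) * Hᵀ‖
          ≤ ‖H * (Iplus θ₂ - Iplus θ₁)‖ * ‖Hᵀ‖ := Matrix.l2_opNorm_mul _ _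
        _ ≤ (‖H‖ * (2 * ‖θ₁ - θ₂‖)) * ‖Hᵀ‖ := by
            apply mul_le_mul_of_nonneg_right ?_ (norm_nonneg _)
            calc ‖H * (Iplus θ₂ - Iplus θ₁)‖ ≤ ‖H‖ * ‖Iplus θ₂ - Iplus θ₁‖ :=
                  Matrix.l2_opNorm_mul _ _
              _ ≤ ‖H‖ * (2 * ‖θ₁ - θ₂‖) := by
                  exact mul_le_mul_of_nonneg_left hIdiff (norm_nonneg _)
        _ = ‖H‖ * (2 * ‖θ₁ - θ₂‖) * ‖H‖ := by rw [norm_transpose]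
    calc ‖kalmanGain H Γ θ₁ * (H * (Iplus θ₂ - Iplus θ₁) * Hᵀ) * S₂⁻¹‖
        ≤ ‖kalmanGain H Γ θ₁ * (H * (Iplus θ₂ - Iplus θ₁) * Hᵀ)‖ * ‖S₂⁻¹‖ :=
          Matrix.l2_opNorm_mul _ _
      _ ≤ (‖kalmanGain H Γ θ₁‖ * (‖H‖ * (2 * ‖θ₁ - θ₂‖) * ‖H‖)) * (1 / γmin) := by
          apply mul_le_mul ?_ hSinv (norm_nonneg _) ?_
          · calc ‖kalmanGain H Γ θ₁ * (H * (Iplus θ₂ - Iplus θ₁) * Hᵀ)‖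
                ≤ ‖kalmanGain H Γ θ₁‖ * ‖H * (Iplus θ₂ - Iplus θ₁) * Hᵀ‖ :=
                  Matrix.l2_opNorm_mul _ _
              _ ≤ ‖kalmanGain H Γ θ₁‖ * (‖H‖ * (2 * ‖θ₁ - θ₂‖) * ‖H‖) :=
                  mul_le_mul_of_nonneg_left hmidn (norm_nonneg _)
          · positivity
  calc ‖kalmanGain H Γ θ₁ - kalmanGain H Γ θ₂‖
      ≤ ‖(θ₁ - θ₂) * Hᵀ * S₂⁻¹‖
        + ‖kalmanGain H Γ θ₁ * (H * (Iplus θ₂ - Iplus θ₁) * Hᵀ) * S₂⁻¹‖ := by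
        rw [hKdiff]; exact norm_add_le _ _
    _ ≤ ‖θ₁ - θ₂‖ * ‖H‖ * (1 / γmin)
        + ‖kalmanGain H Γ θ₁‖ * (‖H‖ * (2 * ‖θ₁ - θ₂‖) * ‖H‖) * (1 / γmin) :=
        add_le_add t1 t2
    _ = ‖H‖ / γmin * (1 + 2 * ‖kalmanGain H Γ θ₁‖ * ‖H‖) * ‖θ₁ - θ₂‖ := by
        field_simp

end KGauxSection
end
end

section
/- Multilevel variance sum bound (key estimate in the proof of Lemma 5.3): Let β, γ > 0. Then there exists a constant C > 0 such that for all ε ∈ (0, 1/2], with L = ⌊2·log₂(ε⁻¹)/β⌋ and J_ℓ = ⌈2^{−(β+2γ)ℓ/3}·M_L⌉ for 0 ≤ ℓ ≤ L, where M_L = 2^{βL} if β > γ, M_L = L²·2^{βL} if β = γ, and M_L = 2^{(β+2γ)L/3} if β < γ, one has Σ_{ℓ=0}^{L} J_ℓ^{−1/2}·2^{−βℓ/2} ≤ C·ε. -/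
noncomputable section

/-- Number of levels `L(ε) = ⌊2 log₂(ε⁻¹)/β⌋`. -/
def numLevels (β ε : ℝ) : ℕ := ⌊2 * Real.logb 2 ε⁻¹ / β⌋₊

/-- The factor `M_L`: `2^{βL}` if `β > γ`, `L² 2^{βL}` if `β = γ`, `2^{(β+2γ)L/3}` if `β < γ`. -/
def MLfactor (β γ : ℝ) (L : ℕ) : ℝ :=
  if γ < β then 2 ^ (β * (L : ℝ))
  else if β = γ then (L : ℝ) ^ 2 * 2 ^ (β * (L : ℝ))
  else 2 ^ ((β + 2 * γ) * (L : ℝ) / 3)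

/-- The level-`ℓ` ensemble size `J_ℓ = ⌈2^{-(β+2γ)ℓ/3} M_{L(ε)}⌉`. -/
def Jlevel (β γ ε : ℝ) (ℓ : ℕ) : ℕ :=
  ⌈2 ^ (-((β + 2 * γ) * (ℓ : ℝ)) / 3) * MLfactor β γ (numLevels β ε)⌉₊

lemma lemA (β ε : ℝ) (hβ : 0 < β) (hε : 0 < ε) :
    (2:ℝ) ^ (-(β * (numLevels β ε : ℝ)) / 2) ≤ 2 ^ (β/2) * ε := by
  set L := numLevels β ε with hL
  have hx : 2 * Real.logb 2 ε⁻¹ / β < (L : ℝ) + 1 := by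
    simpa [hL, numLevels] using Nat.lt_floor_add_one (2 * Real.logb 2 ε⁻¹ / β)
  have h1 : 2 * Real.logb 2 ε⁻¹ < β * ((L : ℝ) + 1) := by
    rw [div_lt_iff₀ hβ] at hx; linarith [hx]
  have hlogb : (2:ℝ) ^ Real.logb 2 ε⁻¹ = ε⁻¹ :=
    Real.rpow_logb two_pos (by norm_num) (by positivity)
  have hexp : -(β * (L : ℝ)) / 2 ≤ β/2 + (- Real.logb 2 ε⁻¹) := by nlinarith
  calc (2:ℝ) ^ (-(β * (L : ℝ)) / 2) ≤ 2 ^ (β/2 + (- Real.logb 2 ε⁻¹)) :=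
        Real.rpow_le_rpow_of_exponent_le (by norm_num) hexp
    _ = 2 ^ (β/2) * ε := by
        rw [Real.rpow_add two_pos, Real.rpow_neg (by norm_num), hlogb, inv_inv]

lemma termB (β γ ε : ℝ) (ℓ : ℕ) (hM : 0 < MLfactor β γ (numLevels β ε)) :
    (Jlevel β γ ε ℓ : ℝ) ^ (-(1:ℝ)/2) * 2 ^ (-(β * (ℓ : ℝ)) / 2)
      ≤ (MLfactor β γ (numLevels β ε)) ^ (-(1:ℝ)/2) * (2 ^ ((γ - β)/3 : ℝ)) ^ ℓ := by
  set M := MLfactor β γ (numLevels β ε) with hMdef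
  set a : ℝ := 2 ^ (-((β + 2 * γ) * (ℓ : ℝ)) / 3) with ha
  have hapos : 0 < a := Real.rpow_pos_of_pos two_pos _
  have haM : 0 < a * M := mul_pos hapos hM
  have hJ : a * M ≤ (Jlevel β γ ε ℓ : ℝ) := Nat.le_ceil _
  have h1 : (Jlevel β γ ε ℓ : ℝ) ^ (-(1:ℝ)/2) ≤ (a * M) ^ (-(1:ℝ)/2) :=
    Real.rpow_le_rpow_of_nonpos haM hJ (by norm_num)
  have h2 : (a * M) ^ (-(1:ℝ)/2) = a ^ (-(1:ℝ)/2) * M ^ (-(1:ℝ)/2) :=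
    Real.mul_rpow hapos.le hM.le
  have h3 : a ^ (-(1:ℝ)/2) = 2 ^ ((-((β + 2 * γ) * (ℓ : ℝ)) / 3) * (-(1:ℝ)/2)) := by
    rw [ha, ← Real.rpow_mul (by norm_num)]
  have h4 : ((2:ℝ) ^ ((γ - β)/3 : ℝ)) ^ ℓ = 2 ^ (((γ - β)/3) * (ℓ : ℝ)) := by
    rw [← Real.rpow_natCast ((2:ℝ) ^ ((γ - β)/3 : ℝ)) ℓ, ← Real.rpow_mul (by norm_num)]
  have h5 : (2:ℝ) ^ ((-((β + 2 * γ) * (ℓ : ℝ)) / 3) * (-(1:ℝ)/2)) * 2 ^ (-(β * (ℓ : ℝ)) / 2)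
      = 2 ^ (((γ - β)/3) * (ℓ : ℝ)) := by
    rw [← Real.rpow_add two_pos]; ring_nf
  have hpow : (0:ℝ) ≤ 2 ^ (-(β * (ℓ : ℝ)) / 2) := (Real.rpow_pos_of_pos two_pos _).le
  calc (Jlevel β γ ε ℓ : ℝ) ^ (-(1:ℝ)/2) * 2 ^ (-(β * (ℓ : ℝ)) / 2)
      ≤ (a * M) ^ (-(1:ℝ)/2) * 2 ^ (-(β * (ℓ : ℝ)) / 2) :=
        mul_le_mul_of_nonneg_right h1 hpow
    _ = M ^ (-(1:ℝ)/2) * ((2:ℝ) ^ ((γ - β)/3 : ℝ)) ^ ℓ := by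
        rw [h2, h3, h4, ← h5]; ring

/-- **Multilevel variance sum bound** (key estimate in the proof of Lemma 5.3):
`Σ_{ℓ=0}^L J_ℓ^{-1/2} 2^{-βℓ/2} ≤ C ε`. -/
theorem multilevel_variance_sum_bound (β γ : ℝ) (hβ : 0 < β) (hγ : 0 < γ) :
    ∃ C : ℝ, 0 < C ∧ ∀ ε : ℝ, 0 < ε → ε ≤ 1 / 2 →
      ∑ ℓ ∈ Finset.range (numLevels β ε + 1),
          (Jlevel β γ ε ℓ : ℝ) ^ (-(1 : ℝ) / 2) * 2 ^ (-(β * (ℓ : ℝ)) / 2)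
        ≤ C * ε := by
  set r : ℝ := 2 ^ ((γ - β)/3 : ℝ) with hrdef
  have hrpos : (0:ℝ) < r := Real.rpow_pos_of_pos two_pos _
  set K : ℝ := if γ < β then 1/(1-r) else if β = γ then 2 else r/(r-1) with hKdef
  have hK : 0 < K := by
    rw [hKdef]; split_ifs with h1 h2
    · have : r < 1 := Real.rpow_lt_one_of_one_lt_of_neg (by norm_num) (by linarith)
      have h1r : (0:ℝ) < 1 - r := by linarith
      positivity
    · norm_num
    · have hbγ : β < γ := lt_of_le_of_ne (not_lt.mp h1) h2
      have : 1 < r := by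
        rw [hrdef, ← Real.rpow_zero 2]
        exact Real.rpow_lt_rpow_of_exponent_lt (by norm_num) (by linarith)
      have : 0 < r - 1 := by linarith
      positivity
  refine ⟨K * 2 ^ (β/2), by positivity, ?_⟩
  intro ε hε hε2
  set L := numLevels β ε with hL
  have hεbound := lemA β ε hβ hε
  rcases lt_trichotomy γ β with hcase | hcase | hcase
  · -- γ < β
    have hr1 : r < 1 := Real.rpow_lt_one_of_one_lt_of_neg (by norm_num) (by linarith)
    have hMeq : MLfactor β γ L = 2 ^ (β * (L:ℝ)) := by rw [MLfactor, if_pos hcase]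
    have hM : 0 < MLfactor β γ L := by rw [hMeq]; positivity
    have hsum : ∑ ℓ ∈ Finset.range (L + 1),
        (Jlevel β γ ε ℓ : ℝ) ^ (-(1:ℝ)/2) * 2 ^ (-(β * (ℓ:ℝ)) / 2)
        ≤ (MLfactor β γ L) ^ (-(1:ℝ)/2) * ∑ ℓ ∈ Finset.range (L + 1), r ^ ℓ := by
      rw [Finset.mul_sum]
      exact Finset.sum_le_sum fun ℓ _ => termB β γ ε ℓ hM
    have hgeom : ∑ ℓ ∈ Finset.range (L + 1), r ^ ℓ ≤ 1/(1-r) := by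
      rw [geom_sum_eq hr1.ne]
      have h1r : (0:ℝ) < 1 - r := by linarith
      have : (r ^ (L+1) - 1)/(r - 1) = (1 - r ^ (L+1))/(1 - r) := by
        rw [div_eq_div_iff (by linarith) (by linarith)]; ring
      rw [this]
      gcongr
      all_goals nlinarith [pow_nonneg hrpos.le (L+1)]
    have hMinv : (MLfactor β γ L) ^ (-(1:ℝ)/2) = 2 ^ (-(β * (L:ℝ))/2) := by
      rw [hMeq, ← Real.rpow_mul (by norm_num)]
      congr 1; ring
    have hKeq : K = 1/(1-r) := by rw [hKdef, if_pos hcase]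
    calc ∑ ℓ ∈ Finset.range (L + 1),
          (Jlevel β γ ε ℓ : ℝ) ^ (-(1:ℝ)/2) * 2 ^ (-(β * (ℓ:ℝ)) / 2)
        ≤ (MLfactor β γ L) ^ (-(1:ℝ)/2) * (1/(1-r)) := by
          refine hsum.trans ?_
          gcongr
      _ = 2 ^ (-(β * (L:ℝ))/2) * (1/(1-r)) := by rw [hMinv]
      _ ≤ (2 ^ (β/2) * ε) * (1/(1-r)) := by
          have h1r : (0:ℝ) < 1 - r := by linarith
          exact mul_le_mul_of_nonneg_right hεbound (by positivity)
      _ = K * 2 ^ (β/2) * ε := by rw [hKeq]; ring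
  · -- γ = β
    subst hcase
    have hKeq : K = 2 := by
      rw [hKdef, if_neg (lt_irrefl γ), if_pos rfl]
    have hr1 : r = 1 := by rw [hrdef, sub_self, zero_div, Real.rpow_zero]
    rcases Nat.eq_zero_or_pos L with hL0 | hLpos
    · -- L = 0 : sum is zero
      have hJ0 : Jlevel γ γ ε 0 = 0 := by
        rw [Jlevel, MLfactor, if_neg (lt_irrefl γ), if_pos rfl, ← hL, hL0]
        norm_num
      rw [hL0]
      rw [Finset.sum_range_one, hJ0]
      rw [Nat.cast_zero, Real.zero_rpow (by norm_num), zero_mul]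
      positivity
    · have hLR : (1:ℝ) ≤ (L:ℝ) := by exact_mod_cast hLpos
      have hMeq : MLfactor γ γ L = (L:ℝ)^2 * 2 ^ (γ * (L:ℝ)) := by
        rw [MLfactor, if_neg (lt_irrefl γ), if_pos rfl]
      have hM : 0 < MLfactor γ γ L := by
        rw [hMeq]; have : (0:ℝ) < (L:ℝ) := by linarith
        positivity
      have hsum : ∑ ℓ ∈ Finset.range (L + 1),
          (Jlevel γ γ ε ℓ : ℝ) ^ (-(1:ℝ)/2) * 2 ^ (-(γ * (ℓ:ℝ)) / 2)
          ≤ (MLfactor γ γ L) ^ (-(1:ℝ)/2) * ∑ ℓ ∈ Finset.range (L + 1), r ^ ℓ := by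
        rw [Finset.mul_sum]
        exact Finset.sum_le_sum fun ℓ _ => termB γ γ ε ℓ hM
      have hgeom : ∑ ℓ ∈ Finset.range (L + 1), r ^ ℓ = (L:ℝ) + 1 := by
        simp [hr1]
      have hLpos' : (0:ℝ) < (L:ℝ) := by linarith
      have hMinv : (MLfactor γ γ L) ^ (-(1:ℝ)/2)
          = ((L:ℝ))⁻¹ * 2 ^ (-(γ * (L:ℝ))/2) := by
        rw [hMeq, Real.mul_rpow (by positivity) (by positivity)]
        congr 1
        · rw [← Real.rpow_natCast (L:ℝ) 2, ← Real.rpow_mul hLpos'.le]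
          norm_num
          exact (Real.rpow_neg_one _)
        · rw [← Real.rpow_mul (by norm_num)]
          congr 1; ring
      calc ∑ ℓ ∈ Finset.range (L + 1),
            (Jlevel γ γ ε ℓ : ℝ) ^ (-(1:ℝ)/2) * 2 ^ (-(γ * (ℓ:ℝ)) / 2)
          ≤ ((L:ℝ))⁻¹ * 2 ^ (-(γ * (L:ℝ))/2) * ((L:ℝ) + 1) := by
            refine hsum.trans ?_
            rw [hgeom, hMinv]
        _ ≤ 2 * 2 ^ (-(γ * (L:ℝ))/2) := by
            rw [mul_right_comm]
            have h2pow : (0:ℝ) < 2 ^ (-(γ * (L:ℝ))/2) := Real.rpow_pos_of_pos two_pos _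
            have : ((L:ℝ))⁻¹ * ((L:ℝ) + 1) ≤ 2 := by
              rw [inv_mul_le_iff₀ hLpos']; linarith
            nlinarith
        _ ≤ 2 * (2 ^ (γ/2) * ε) := by gcongr
        _ = K * 2 ^ (γ/2) * ε := by rw [hKeq]; ring
  · -- β < γ
    have hne : β ≠ γ := hcase.ne
    have hKeq : K = r/(r-1) := by rw [hKdef, if_neg (not_lt.mpr hcase.le), if_neg hne]
    have hr1 : 1 < r := by
      rw [hrdef, ← Real.rpow_zero 2]
      exact Real.rpow_lt_rpow_of_exponent_lt (by norm_num) (by linarith)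
    have hMeq : MLfactor β γ L = 2 ^ ((β + 2*γ) * (L:ℝ) / 3) := by
      rw [MLfactor, if_neg (not_lt.mpr hcase.le), if_neg hne]
    have hM : 0 < MLfactor β γ L := by rw [hMeq]; positivity
    have hsum : ∑ ℓ ∈ Finset.range (L + 1),
        (Jlevel β γ ε ℓ : ℝ) ^ (-(1:ℝ)/2) * 2 ^ (-(β * (ℓ:ℝ)) / 2)
        ≤ (MLfactor β γ L) ^ (-(1:ℝ)/2) * ∑ ℓ ∈ Finset.range (L + 1), r ^ ℓ := by
      rw [Finset.mul_sum]
      exact Finset.sum_le_sum fun ℓ _ => termB β γ ε ℓ hM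
    have hgeom : ∑ ℓ ∈ Finset.range (L + 1), r ^ ℓ ≤ r ^ (L+1) / (r-1) := by
      rw [geom_sum_eq hr1.ne' (L+1)]
      gcongr
      · linarith
    have hkey : (MLfactor β γ L) ^ (-(1:ℝ)/2) * r ^ (L+1)
        = 2 ^ (-(β * (L:ℝ))/2) * r := by
      rw [hMeq, ← Real.rpow_mul (by norm_num),
        ← Real.rpow_natCast r (L+1), hrdef, ← Real.rpow_mul (by norm_num),
        ← Real.rpow_add two_pos, ← Real.rpow_add two_pos]
      congr 1
      push_cast
      ring
    calc ∑ ℓ ∈ Finset.range (L + 1),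
          (Jlevel β γ ε ℓ : ℝ) ^ (-(1:ℝ)/2) * 2 ^ (-(β * (ℓ:ℝ)) / 2)
        ≤ (MLfactor β γ L) ^ (-(1:ℝ)/2) * (r ^ (L+1) / (r-1)) := by
          refine hsum.trans ?_
          gcongr
      _ = (MLfactor β γ L) ^ (-(1:ℝ)/2) * r ^ (L+1) / (r-1) := by ring
      _ = 2 ^ (-(β * (L:ℝ))/2) * r / (r-1) := by rw [hkey]
      _ ≤ (2 ^ (β/2) * ε) * r / (r-1) := by
          gcongr
      _ = K * 2 ^ (β/2) * ε := by rw [hKeq]; ring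
end
end

section
/- EnKF update-map Lipschitz bound (key inequality in Lemma A.3): Let H ∈ ℝ^{k×d}, y ∈ ℝ^k, and Γ ∈ ℝ^{k×k} symmetric positive definite with smallest eigenvalue γ_min > 0. Define Ψ^g(u, θ, ξ) := g(u) + K(θ)·(y − H·g(u) + √Γ·ξ) with Kalman gain K(θ) := θ·Hᵀ·(H·I⁺(θ)·Hᵀ + Γ)^{−1}. Let ξ be an ℝ^k-valued random variable, let θ₁ ∈ ℝ^{d×d} be a deterministic symmetric positive semi-definite matrix, let θ₂ be a random symmetric d×d matrix, and let g₁(u₁) and g₂(u₂) be ℝ^d-valued random variables, all with all moments finite. Then for every p ≥ 2: ‖Ψ^{g₁}(u₁, θ₁, ξ) − Ψ^{g₂}(u₂, θ₂, ξ)‖_p ≤ (1 + |H|²·|θ₁|/γ_min)·‖g₁(u₁) − g₂(u₂)‖_p + (|H|/γ_min + 2·|H|³·|θ₁|/γ_min²)·‖y − H·g₂(u₂) + √Γ·ξ‖_{2p}·‖θ₁ − θ₂‖_{2p}. -/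
open MeasureTheory
open scoped Matrix Matrix.Norms.L2Operator InnerProductSpace

noncomputable section

/-- The `p`-norm `‖u‖_p = E[|u|^p]^{1/p}` of a random variable `u` (here the norm on matrices
is the spectral norm, provided by the scoped `Matrix.L2OpNorm` instance). -/
def pNorm {Ω : Type*} [MeasurableSpace Ω] (μ : Measure Ω) {E : Type*} [NormedAddCommGroup E]
    (u : Ω → E) (p : ℝ) : ℝ :=
  (∫ ω, ‖u ω‖ ^ p ∂μ) ^ (1 / p)

open Classical in
/-- The unique positive semi-definite square root of a positive semi-definite matrix
(junk value `0` otherwise). -/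
def matSqrt {d : ℕ} (M : Matrix (Fin d) (Fin d) ℝ) : Matrix (Fin d) (Fin d) ℝ :=
  if h : M.PosSemidef then
    (h.1.eigenvectorUnitary : Matrix (Fin d) (Fin d) ℝ)
      * Matrix.diagonal (fun i => Real.sqrt (h.1.eigenvalues i))
      * (star h.1.eigenvectorUnitary : Matrix (Fin d) (Fin d) ℝ)
  else 0

/-- The EnKF particle update `Ψ^g(u, θ, ξ) = g(u) + K(θ)(y − H g(u) + √Γ ξ)`, expressed in
terms of the model evaluation `gu = g(u)`. -/
def enkfUpdate {d k : ℕ} (H : Matrix (Fin k) (Fin d) ℝ) (Γ : Matrix (Fin k) (Fin k) ℝ)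
    (y : EuclideanSpace ℝ (Fin k)) (gu : EuclideanSpace ℝ (Fin d))
    (θ : Matrix (Fin d) (Fin d) ℝ) (ξv : EuclideanSpace ℝ (Fin k)) :
    EuclideanSpace ℝ (Fin d) :=
  gu + Matrix.toEuclideanLin (kalmanGain H Γ θ)
    (y - Matrix.toEuclideanLin H gu + Matrix.toEuclideanLin (matSqrt Γ) ξv)

namespace EnkfAux

variable {m n : ℕ}

lemma tel_mul (M : Matrix (Fin m) (Fin n) ℝ) (N : Matrix (Fin n) (Fin n) ℝ)
    (x : EuclideanSpace ℝ (Fin n)) :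
    Matrix.toEuclideanLin (M * N) x = Matrix.toEuclideanLin M (Matrix.toEuclideanLin N x) := by
  simp [Matrix.toEuclideanLin_apply, Matrix.mulVec_mulVec]

lemma norm_tel_le (M : Matrix (Fin m) (Fin n) ℝ) (x : EuclideanSpace ℝ (Fin n)) :
    ‖Matrix.toEuclideanLin M x‖ ≤ ‖M‖ * ‖x‖ :=
  (Matrix.toEuclideanLin.trans LinearMap.toContinuousLinearMap M).le_opNorm x

lemma norm_transpose (H : Matrix (Fin m) (Fin n) ℝ) : ‖Hᵀ‖ = ‖H‖ := by
  rw [← Matrix.conjTranspose_eq_transpose_of_trivial]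
  exact Matrix.l2_opNorm_conjTranspose H

lemma tel_vecMulVec (u v x : EuclideanSpace ℝ (Fin n)) :
    Matrix.toEuclideanLin (Matrix.vecMulVec ((WithLp.equiv 2 (Fin n → ℝ)) u) ((WithLp.equiv 2 (Fin n → ℝ)) v)) x = ⟪v, x⟫_ℝ • u := by
  ext i
  simp [Matrix.toEuclideanLin_apply, Matrix.mulVec, Matrix.vecMulVec_apply, dotProduct,
    PiLp.inner_apply, RCLike.inner_apply, Finset.mul_sum]
  rw [Finset.sum_mul]
  exact Finset.sum_congr rfl fun j _ => by ring


section Spectral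

variable {n : ℕ} {M : Matrix (Fin n) (Fin n) ℝ} (hM : M.IsHermitian)

/-- Action of a sum of rank-one projectors. -/
lemma tel_sum (c : Fin n → ℝ) (x : EuclideanSpace ℝ (Fin n)) :
    Matrix.toEuclideanLin
        (∑ k, c k • Matrix.vecMulVec ((WithLp.equiv 2 (Fin n → ℝ)) (hM.eigenvectorBasis k)) ((WithLp.equiv 2 (Fin n → ℝ)) (hM.eigenvectorBasis k))) x
      = ∑ k, (c k * ⟪hM.eigenvectorBasis k, x⟫_ℝ) • hM.eigenvectorBasis k := by
  rw [map_sum]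
  simp only [LinearMap.sum_apply]
  refine Finset.sum_congr rfl fun j _ => ?_
  rw [_root_.map_smul]
  simp only [LinearMap.smul_apply, tel_vecMulVec, smul_smul]

lemma norm_sq_sum_smul (f : Fin n → ℝ) :
    ‖∑ k, f k • hM.eigenvectorBasis k‖ ^ 2 = ∑ k, f k ^ 2 := by
  have h := hM.eigenvectorBasis.orthonormal.inner_sum f f Finset.univ
  rw [real_inner_self_eq_norm_sq] at h
  simpa [sq] using h

lemma parseval (x : EuclideanSpace ℝ (Fin n)) :
    ∑ k, ⟪hM.eigenvectorBasis k, x⟫_ℝ ^ 2 = ‖x‖ ^ 2 := by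
  rw [← norm_sq_sum_smul hM (fun k => ⟪hM.eigenvectorBasis k, x⟫_ℝ),
    hM.eigenvectorBasis.sum_repr' x]

/-- A Hermitian matrix equals the sum of its spectral projections. -/
lemma hermitian_eq_sum :
    M = ∑ k, hM.eigenvalues k •
      Matrix.vecMulVec ((WithLp.equiv 2 (Fin n → ℝ)) (hM.eigenvectorBasis k)) ((WithLp.equiv 2 (Fin n → ℝ)) (hM.eigenvectorBasis k)) := by
  apply Matrix.toEuclideanLin.injective
  apply LinearMap.ext
  intro x
  rw [tel_sum hM]
  conv_lhs => rw [← hM.eigenvectorBasis.sum_repr' x, map_sum]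
  refine Finset.sum_congr rfl fun j _ => ?_
  rw [_root_.map_smul]
  have h1 : Matrix.toEuclideanLin M (hM.eigenvectorBasis j)
      = hM.eigenvalues j • hM.eigenvectorBasis j := by
    apply (WithLp.equiv 2 (Fin n → ℝ)).injective
    simpa [Matrix.toEuclideanLin_apply] using hM.mulVec_eigenvectorBasis j
  rw [h1, smul_smul, mul_comm]

lemma tel_sum_norm_le (c : Fin n → ℝ) {C : ℝ} (hC : 0 ≤ C) (hc : ∀ k, |c k| ≤ C)
    (x : EuclideanSpace ℝ (Fin n)) :
    ‖Matrix.toEuclideanLin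
        (∑ k, c k • Matrix.vecMulVec ((WithLp.equiv 2 (Fin n → ℝ)) (hM.eigenvectorBasis k)) ((WithLp.equiv 2 (Fin n → ℝ)) (hM.eigenvectorBasis k))) x‖
      ≤ C * ‖x‖ := by
  have h1 : ‖Matrix.toEuclideanLin
      (∑ k, c k • Matrix.vecMulVec ((WithLp.equiv 2 (Fin n → ℝ)) (hM.eigenvectorBasis k)) ((WithLp.equiv 2 (Fin n → ℝ)) (hM.eigenvectorBasis k))) x‖ ^ 2
      = ∑ k, (c k * ⟪hM.eigenvectorBasis k, x⟫_ℝ) ^ 2 := by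
    rw [tel_sum hM, norm_sq_sum_smul hM]
  have h2 : ∑ k, (c k * ⟪hM.eigenvectorBasis k, x⟫_ℝ) ^ 2 ≤ C ^ 2 * ‖x‖ ^ 2 := by
    rw [← parseval hM x, Finset.mul_sum]
    refine Finset.sum_le_sum fun k _ => ?_
    have := hc k
    have h3 : (c k) ^ 2 ≤ C ^ 2 := sq_le_sq' (by linarith [abs_le.1 (hc k)]) (abs_le.1 (hc k)).2
    have h4 : (0:ℝ) ≤ ⟪hM.eigenvectorBasis k, x⟫_ℝ ^ 2 := sq_nonneg _
    calc (c k * ⟪hM.eigenvectorBasis k, x⟫_ℝ) ^ 2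
        = c k ^ 2 * ⟪hM.eigenvectorBasis k, x⟫_ℝ ^ 2 := by ring
      _ ≤ C ^ 2 * ⟪hM.eigenvectorBasis k, x⟫_ℝ ^ 2 := by nlinarith
  nlinarith [norm_nonneg (Matrix.toEuclideanLin
    (∑ k, c k • Matrix.vecMulVec ((WithLp.equiv 2 (Fin n → ℝ)) (hM.eigenvectorBasis k)) ((WithLp.equiv 2 (Fin n → ℝ)) (hM.eigenvectorBasis k))) x),
    norm_nonneg x, mul_nonneg hC (norm_nonneg x)]

lemma inner_tel_sum (c : Fin n → ℝ) (x : EuclideanSpace ℝ (Fin n)) :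
    ⟪x, Matrix.toEuclideanLin
        (∑ k, c k • Matrix.vecMulVec ((WithLp.equiv 2 (Fin n → ℝ)) (hM.eigenvectorBasis k)) ((WithLp.equiv 2 (Fin n → ℝ)) (hM.eigenvectorBasis k))) x⟫_ℝ
      = ∑ k, c k * ⟪hM.eigenvectorBasis k, x⟫_ℝ ^ 2 := by
  rw [tel_sum hM, inner_sum]
  refine Finset.sum_congr rfl fun j _ => ?_
  rw [real_inner_smul_right, real_inner_comm]
  ring

end Spectral


section Iplus

variable {n : ℕ} {M : Matrix (Fin n) (Fin n) ℝ}

lemma inner_tel_eq_dot (N : Matrix (Fin n) (Fin n) ℝ) (x : EuclideanSpace ℝ (Fin n)) :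
    ⟪x, Matrix.toEuclideanLin N x⟫_ℝ = dotProduct (star ((WithLp.equiv 2 (Fin n → ℝ)) x)) (N *ᵥ ((WithLp.equiv 2 (Fin n → ℝ)) x)) := by
  simp [PiLp.inner_apply, RCLike.inner_apply, Matrix.toEuclideanLin_apply, dotProduct, mul_comm]

lemma inner_tel_nonneg {N : Matrix (Fin n) (Fin n) ℝ} (hN : N.PosSemidef)
    (x : EuclideanSpace ℝ (Fin n)) : 0 ≤ ⟪x, Matrix.toEuclideanLin N x⟫_ℝ := by
  rw [inner_tel_eq_dot]
  exact hN.dotProduct_mulVec_nonneg _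

lemma tel_eigenvector (hM : M.IsHermitian) (j : Fin n) :
    Matrix.toEuclideanLin M (hM.eigenvectorBasis j)
      = hM.eigenvalues j • hM.eigenvectorBasis j := by
  apply (WithLp.equiv 2 (Fin n → ℝ)).injective
  simpa [Matrix.toEuclideanLin_apply] using hM.mulVec_eigenvectorBasis j

lemma eigenvalue_eq_inner (hM : M.IsHermitian) (j : Fin n) :
    hM.eigenvalues j
      = ⟪hM.eigenvectorBasis j, Matrix.toEuclideanLin M (hM.eigenvectorBasis j)⟫_ℝ := by
  rw [tel_eigenvector hM j, real_inner_smul_right, real_inner_self_eq_norm_sq,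
    hM.eigenvectorBasis.orthonormal.1 j]
  ring

lemma Iplus_eq_sum (hM : M.IsHermitian) :
    Iplus M = ∑ k, (if 0 ≤ hM.eigenvalues k then hM.eigenvalues k else 0) •
      Matrix.vecMulVec ((WithLp.equiv 2 (Fin n → ℝ)) (hM.eigenvectorBasis k)) ((WithLp.equiv 2 (Fin n → ℝ)) (hM.eigenvectorBasis k)) := by
  rw [Iplus, dif_pos hM]
  refine Finset.sum_congr rfl fun j _ => ?_
  split_ifs with h
  · rfl
  · rw [zero_smul]

lemma isHermitian_sum_proj (hM : M.IsHermitian) (c : Fin n → ℝ) :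
    (∑ k, c k • Matrix.vecMulVec ((WithLp.equiv 2 (Fin n → ℝ)) (hM.eigenvectorBasis k))
      ((WithLp.equiv 2 (Fin n → ℝ)) (hM.eigenvectorBasis k))).IsHermitian := by
  show _ = _
  ext i j
  simp [Matrix.conjTranspose_apply, Matrix.vecMulVec_apply, Matrix.sum_apply, mul_comm]

lemma posSemidef_of_inner {N : Matrix (Fin n) (Fin n) ℝ} (hN : N.IsHermitian)
    (h : ∀ x : EuclideanSpace ℝ (Fin n), 0 ≤ ⟪x, Matrix.toEuclideanLin N x⟫_ℝ) :
    N.PosSemidef := by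
  refine Matrix.PosSemidef.of_dotProduct_mulVec_nonneg hN fun x => ?_
  have h2 := h ((WithLp.equiv 2 (Fin n → ℝ)).symm x)
  rwa [inner_tel_eq_dot, Equiv.apply_symm_apply] at h2

lemma Iplus_posSemidef (hM : M.IsHermitian) : (Iplus M).PosSemidef := by
  rw [Iplus_eq_sum hM]
  refine posSemidef_of_inner (isHermitian_sum_proj hM _) fun x => ?_
  rw [inner_tel_sum hM (fun j => if 0 ≤ hM.eigenvalues j then hM.eigenvalues j else 0) x]
  refine Finset.sum_nonneg fun j _ => ?_
  split_ifs with hj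
  · exact mul_nonneg hj (sq_nonneg _)
  · simp

lemma Iplus_of_posSemidef {θ₁ : Matrix (Fin n) (Fin n) ℝ} (hθ₁ : θ₁.PosSemidef) :
    Iplus θ₁ = θ₁ := by
  rw [Iplus_eq_sum hθ₁.1]
  refine Eq.trans (Finset.sum_congr rfl fun j _ => ?_) (hermitian_eq_sum hθ₁.1).symm
  rw [if_pos (hθ₁.eigenvalues_nonneg j)]

lemma opnorm_le_of_forall {m : ℕ} (N : Matrix (Fin m) (Fin n) ℝ) {C : ℝ} (hC : 0 ≤ C)
    (h : ∀ x : EuclideanSpace ℝ (Fin n), ‖Matrix.toEuclideanLin N x‖ ≤ C * ‖x‖) : ‖N‖ ≤ C := by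
  rw [Matrix.l2_opNorm_def]
  exact ContinuousLinearMap.opNorm_le_bound _ hC fun x => h x

lemma norm_Iplus_sub_le {θ₁ : Matrix (Fin n) (Fin n) ℝ} (hθ₁ : θ₁.PosSemidef)
    (hM : M.IsHermitian) : ‖Iplus M - M‖ ≤ ‖θ₁ - M‖ := by
  have hsum : Iplus M - M = ∑ k, ((if 0 ≤ hM.eigenvalues k then hM.eigenvalues k else 0)
      - hM.eigenvalues k) • Matrix.vecMulVec ((WithLp.equiv 2 (Fin n → ℝ)) (hM.eigenvectorBasis k))
      ((WithLp.equiv 2 (Fin n → ℝ)) (hM.eigenvectorBasis k)) := by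
    have e1 : Iplus M - M = (∑ k, (if 0 ≤ hM.eigenvalues k then hM.eigenvalues k else 0) •
        Matrix.vecMulVec ((WithLp.equiv 2 (Fin n → ℝ)) (hM.eigenvectorBasis k))
          ((WithLp.equiv 2 (Fin n → ℝ)) (hM.eigenvectorBasis k)))
        - ∑ k, hM.eigenvalues k • Matrix.vecMulVec
          ((WithLp.equiv 2 (Fin n → ℝ)) (hM.eigenvectorBasis k))
          ((WithLp.equiv 2 (Fin n → ℝ)) (hM.eigenvectorBasis k)) := by
      rw [← Iplus_eq_sum hM, ← hermitian_eq_sum hM]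
    rw [e1, ← Finset.sum_sub_distrib]
    exact Finset.sum_congr rfl fun j _ => (sub_smul _ _ _).symm
  refine opnorm_le_of_forall _ (norm_nonneg _) fun x => ?_
  rw [hsum]
  refine tel_sum_norm_le hM _ (norm_nonneg _) (fun j => ?_) x
  split_ifs with hj
  · simpa using norm_nonneg (θ₁ - M)
  · push_neg at hj
    have h1 : 0 ≤ ⟪hM.eigenvectorBasis j, Matrix.toEuclideanLin θ₁ (hM.eigenvectorBasis j)⟫_ℝ :=
      inner_tel_nonneg hθ₁ _
    have h2 : ⟪hM.eigenvectorBasis j,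
        Matrix.toEuclideanLin (θ₁ - M) (hM.eigenvectorBasis j)⟫_ℝ ≤ ‖θ₁ - M‖ := by
      refine le_trans (real_inner_le_norm _ _) ?_
      rw [hM.eigenvectorBasis.orthonormal.1 j, one_mul]
      calc ‖Matrix.toEuclideanLin (θ₁ - M) (hM.eigenvectorBasis j)‖
          ≤ ‖θ₁ - M‖ * ‖hM.eigenvectorBasis j‖ := norm_tel_le _ _
        _ = ‖θ₁ - M‖ := by rw [hM.eigenvectorBasis.orthonormal.1 j, mul_one]
    have h3 : ⟪hM.eigenvectorBasis j,
        Matrix.toEuclideanLin (θ₁ - M) (hM.eigenvectorBasis j)⟫_ℝ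
        = ⟪hM.eigenvectorBasis j, Matrix.toEuclideanLin θ₁ (hM.eigenvectorBasis j)⟫_ℝ
          - hM.eigenvalues j := by
      rw [map_sub, LinearMap.sub_apply, inner_sub_right, eigenvalue_eq_inner hM j]
    rw [abs_of_nonneg (by linarith)]
    linarith

end Iplus

section Inverse

variable {d k : ℕ}

lemma inner_gamma_ge {Γ : Matrix (Fin k) (Fin k) ℝ} (hΓ : Γ.PosDef) {γmin : ℝ}
    (hlb : ∀ i, γmin ≤ hΓ.1.eigenvalues i) (x : EuclideanSpace ℝ (Fin k)) :
    γmin * ‖x‖ ^ 2 ≤ ⟪x, Matrix.toEuclideanLin Γ x⟫_ℝ := by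
  have h0 : Matrix.toEuclideanLin Γ x = Matrix.toEuclideanLin (∑ i, hΓ.1.eigenvalues i •
      Matrix.vecMulVec ((WithLp.equiv 2 (Fin k → ℝ)) (hΓ.1.eigenvectorBasis i)) ((WithLp.equiv 2 (Fin k → ℝ)) (hΓ.1.eigenvectorBasis i))) x := by
    rw [← hermitian_eq_sum hΓ.1]
  rw [h0, inner_tel_sum hΓ.1, ← parseval hΓ.1 x, Finset.mul_sum]
  exact Finset.sum_le_sum fun i _ => mul_le_mul_of_nonneg_right (hlb i) (sq_nonneg _)

variable (H : Matrix (Fin k) (Fin d) ℝ) {Γ : Matrix (Fin k) (Fin k) ℝ}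
  {γmin : ℝ} {θ : Matrix (Fin d) (Fin d) ℝ}

lemma A_posdef (hΓ : Γ.PosDef) (hγ : 0 < γmin) (hlb : ∀ i, γmin ≤ hΓ.1.eigenvalues i)
    (hθ : θ.IsHermitian) : (H * Iplus θ * Hᵀ + Γ).PosDef := by
  have hpsd : (H * Iplus θ * Hᵀ).PosSemidef := by
    rw [← Matrix.conjTranspose_eq_transpose_of_trivial]
    exact (Iplus_posSemidef hθ).mul_mul_conjTranspose_same H
  refine Matrix.PosDef.of_dotProduct_mulVec_pos (hpsd.1.add hΓ.1) fun x hx => ?_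
  have h1 : 0 ≤ dotProduct (star x) ((H * Iplus θ * Hᵀ) *ᵥ x) := hpsd.dotProduct_mulVec_nonneg x
  have h2 : γmin * ‖(WithLp.equiv 2 (Fin k → ℝ)).symm x‖ ^ 2
      ≤ dotProduct (star x) (Γ *ᵥ x) := by
    have := inner_gamma_ge hΓ hlb ((WithLp.equiv 2 (Fin k → ℝ)).symm x)
    rwa [inner_tel_eq_dot, Equiv.apply_symm_apply] at this
  have hx' : (WithLp.equiv 2 (Fin k → ℝ)).symm x ≠ 0 := by
    intro h0
    exact hx (by simpa using congrArg (WithLp.equiv 2 (Fin k → ℝ)) h0)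
  have hnorm : 0 < ‖(WithLp.equiv 2 (Fin k → ℝ)).symm x‖ := norm_pos_iff.mpr hx'
  rw [Matrix.add_mulVec, dotProduct_add]
  nlinarith [mul_pos hγ (pow_pos hnorm 2)]

lemma A_mul_inv (hΓ : Γ.PosDef) (hγ : 0 < γmin) (hlb : ∀ i, γmin ≤ hΓ.1.eigenvalues i)
    (hθ : θ.IsHermitian) : (H * Iplus θ * Hᵀ + Γ) * (H * Iplus θ * Hᵀ + Γ)⁻¹ = 1 :=
  Matrix.mul_nonsing_inv _ ((A_posdef H hΓ hγ hlb hθ).det_pos.ne'.isUnit)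

lemma A_inv_mul (hΓ : Γ.PosDef) (hγ : 0 < γmin) (hlb : ∀ i, γmin ≤ hΓ.1.eigenvalues i)
    (hθ : θ.IsHermitian) : (H * Iplus θ * Hᵀ + Γ)⁻¹ * (H * Iplus θ * Hᵀ + Γ) = 1 :=
  Matrix.nonsing_inv_mul _ ((A_posdef H hΓ hγ hlb hθ).det_pos.ne'.isUnit)

lemma norm_A_inv_le (hΓ : Γ.PosDef) (hγ : 0 < γmin) (hlb : ∀ i, γmin ≤ hΓ.1.eigenvalues i)
    (hθ : θ.IsHermitian) : ‖(H * Iplus θ * Hᵀ + Γ)⁻¹‖ ≤ γmin⁻¹ := by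
  have hpsd : (H * Iplus θ * Hᵀ).PosSemidef := by
    rw [← Matrix.conjTranspose_eq_transpose_of_trivial]
    exact (Iplus_posSemidef hθ).mul_mul_conjTranspose_same H
  refine opnorm_le_of_forall _ (by positivity) fun x => ?_
  set w := Matrix.toEuclideanLin (H * Iplus θ * Hᵀ + Γ)⁻¹ x with hw
  have h1 : Matrix.toEuclideanLin (H * Iplus θ * Hᵀ + Γ) w = x := by
    rw [hw, ← tel_mul, A_mul_inv H hΓ hγ hlb hθ]
    simp [Matrix.toEuclideanLin_apply, Matrix.one_mulVec]
  have h2 : γmin * ‖w‖ ^ 2 ≤ ⟪w, x⟫_ℝ := by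
    rw [← h1, map_add, LinearMap.add_apply, inner_add_right]
    have := inner_tel_nonneg hpsd w
    have := inner_gamma_ge hΓ hlb w
    linarith
  have h3 : ⟪w, x⟫_ℝ ≤ ‖w‖ * ‖x‖ := real_inner_le_norm w x
  rcases eq_or_lt_of_le (norm_nonneg w) with h4 | h4
  · rw [← h4]; positivity
  · rw [← mul_le_mul_iff_of_pos_left hγ, ← mul_assoc, mul_inv_cancel₀ hγ.ne', one_mul]
    nlinarith

end Inverse

section Pointwise

variable {d k : ℕ}

lemma enkf_pointwise (H : Matrix (Fin k) (Fin d) ℝ) {Γ : Matrix (Fin k) (Fin k) ℝ}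
    (hΓ : Γ.PosDef) {γmin : ℝ} (hγ : 0 < γmin) (hlb : ∀ i, γmin ≤ hΓ.1.eigenvalues i)
    (y : EuclideanSpace ℝ (Fin k)) {θ₁ : Matrix (Fin d) (Fin d) ℝ} (hθ₁ : θ₁.PosSemidef)
    {θ : Matrix (Fin d) (Fin d) ℝ} (hθ : θ.IsHermitian)
    (u₁ u₂ : EuclideanSpace ℝ (Fin d)) (w : EuclideanSpace ℝ (Fin k)) :
    ‖enkfUpdate H Γ y u₁ θ₁ w - enkfUpdate H Γ y u₂ θ w‖
      ≤ (1 + ‖H‖ ^ 2 * ‖θ₁‖ / γmin) * ‖u₁ - u₂‖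
        + (‖H‖ / γmin + 2 * ‖H‖ ^ 3 * ‖θ₁‖ / γmin ^ 2) * ‖θ₁ - θ‖
          * ‖y - Matrix.toEuclideanLin H u₂ + Matrix.toEuclideanLin (matSqrt Γ) w‖ := by
  set A₁ := H * Iplus θ₁ * Hᵀ + Γ with hA₁def
  set A₂ := H * Iplus θ * Hᵀ + Γ with hA₂def
  set K₁ := kalmanGain H Γ θ₁ with hK₁def
  set K₂ := kalmanGain H Γ θ with hK₂def
  set z := y - Matrix.toEuclideanLin H u₂ + Matrix.toEuclideanLin (matSqrt Γ) w with hzdef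
  have hA₁inv : A₁ * A₁⁻¹ = 1 := A_mul_inv H hΓ hγ hlb hθ₁.1
  have hA₁inv' : A₁⁻¹ * A₁ = 1 := A_inv_mul H hΓ hγ hlb hθ₁.1
  have hA₂inv : A₂ * A₂⁻¹ = 1 := A_mul_inv H hΓ hγ hlb hθ
  have hnA₁ : ‖A₁⁻¹‖ ≤ γmin⁻¹ := norm_A_inv_le H hΓ hγ hlb hθ₁.1
  have hnA₂ : ‖A₂⁻¹‖ ≤ γmin⁻¹ := norm_A_inv_le H hΓ hγ hlb hθ
  -- decomposition of the update difference
  have hid : enkfUpdate H Γ y u₁ θ₁ w - enkfUpdate H Γ y u₂ θ w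
      = ((u₁ - u₂) - Matrix.toEuclideanLin K₁ (Matrix.toEuclideanLin H (u₁ - u₂)))
        + (Matrix.toEuclideanLin (K₁ - K₂) z) := by
    simp only [enkfUpdate, hzdef, map_sub, map_add, LinearMap.sub_apply]
    abel
  rw [hid]
  have hg : (0:ℝ) ≤ γmin⁻¹ := by positivity
  -- bound on the Kalman gain K₁
  have hnK₁ : ‖K₁‖ ≤ ‖θ₁‖ * ‖H‖ * γmin⁻¹ := by
    rw [hK₁def, kalmanGain]
    calc ‖θ₁ * Hᵀ * (H * Iplus θ₁ * Hᵀ + Γ)⁻¹‖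
        ≤ ‖θ₁ * Hᵀ‖ * ‖A₁⁻¹‖ := Matrix.l2_opNorm_mul _ _
      _ ≤ ‖θ₁‖ * ‖Hᵀ‖ * γmin⁻¹ := by
          refine mul_le_mul (Matrix.l2_opNorm_mul _ _) hnA₁ (norm_nonneg _) ?_
          positivity
      _ = ‖θ₁‖ * ‖H‖ * γmin⁻¹ := by rw [norm_transpose]
  -- first term
  have ht1 : ‖(u₁ - u₂) - Matrix.toEuclideanLin K₁ (Matrix.toEuclideanLin H (u₁ - u₂))‖
      ≤ ‖u₁ - u₂‖ + (‖θ₁‖ * ‖H‖ * γmin⁻¹) * (‖H‖ * ‖u₁ - u₂‖) := by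
    refine le_trans (norm_sub_le _ _) ?_
    refine add_le_add le_rfl ?_
    calc ‖Matrix.toEuclideanLin K₁ (Matrix.toEuclideanLin H (u₁ - u₂))‖
        ≤ ‖K₁‖ * ‖Matrix.toEuclideanLin H (u₁ - u₂)‖ := norm_tel_le _ _
      _ ≤ (‖θ₁‖ * ‖H‖ * γmin⁻¹) * (‖H‖ * ‖u₁ - u₂‖) := by
          refine mul_le_mul hnK₁ (norm_tel_le _ _) (norm_nonneg _) ?_
          positivity
  -- the gain difference
  have hIp1 : Iplus θ₁ = θ₁ := Iplus_of_posSemidef hθ₁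
  have hKdiff : K₁ - K₂ = (θ₁ - θ) * Hᵀ * A₂⁻¹
      + θ₁ * Hᵀ * (A₁⁻¹ * ((H * (Iplus θ - θ₁) * Hᵀ) * A₂⁻¹)) := by
    have hAdiff : A₂ - A₁ = H * (Iplus θ - θ₁) * Hᵀ := by
      rw [hA₂def, hA₁def, hIp1, add_sub_add_right_eq_sub, Matrix.mul_sub, Matrix.sub_mul]
    have hinv : A₁⁻¹ - A₂⁻¹ = A₁⁻¹ * (A₂ - A₁) * A₂⁻¹ := by
      rw [Matrix.mul_sub, Matrix.sub_mul, hA₁inv', one_mul, Matrix.mul_assoc, hA₂inv, mul_one]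
    have h5 : K₁ - K₂ = (θ₁ - θ) * Hᵀ * A₂⁻¹ + θ₁ * Hᵀ * (A₁⁻¹ - A₂⁻¹) := by
      rw [hK₁def, hK₂def, kalmanGain, kalmanGain, ← hA₁def, ← hA₂def, Matrix.sub_mul,
        Matrix.sub_mul, Matrix.mul_sub]
      abel
    rw [h5, hinv, hAdiff]
    simp only [Matrix.mul_assoc]
  have hnIp : ‖Iplus θ - θ₁‖ ≤ 2 * ‖θ₁ - θ‖ := by
    have h6 : Iplus θ - θ₁ = (Iplus θ - θ) + (θ - θ₁) := by abel
    rw [h6]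
    refine le_trans (norm_add_le _ _) ?_
    have h7 := norm_Iplus_sub_le hθ₁ hθ
    have h8 : ‖θ - θ₁‖ = ‖θ₁ - θ‖ := norm_sub_rev _ _
    linarith
  have hnK : ‖K₁ - K₂‖ ≤ ‖θ₁ - θ‖ * ‖H‖ * γmin⁻¹
      + ‖θ₁‖ * ‖H‖ * (γmin⁻¹ * (‖H‖ * (2 * ‖θ₁ - θ‖) * ‖H‖ * γmin⁻¹)) := by
    rw [hKdiff]
    refine le_trans (norm_add_le _ _) (add_le_add ?_ ?_)
    · calc ‖(θ₁ - θ) * Hᵀ * A₂⁻¹‖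
          ≤ ‖(θ₁ - θ) * Hᵀ‖ * ‖A₂⁻¹‖ := Matrix.l2_opNorm_mul _ _
        _ ≤ ‖θ₁ - θ‖ * ‖Hᵀ‖ * γmin⁻¹ := by
            refine mul_le_mul (Matrix.l2_opNorm_mul _ _) hnA₂ (norm_nonneg _) ?_
            positivity
        _ = ‖θ₁ - θ‖ * ‖H‖ * γmin⁻¹ := by rw [norm_transpose]
    · have hmid : ‖(H * (Iplus θ - θ₁) * Hᵀ) * A₂⁻¹‖
          ≤ ‖H‖ * (2 * ‖θ₁ - θ‖) * ‖H‖ * γmin⁻¹ := by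
        calc ‖(H * (Iplus θ - θ₁) * Hᵀ) * A₂⁻¹‖
            ≤ ‖H * (Iplus θ - θ₁) * Hᵀ‖ * ‖A₂⁻¹‖ := Matrix.l2_opNorm_mul _ _
          _ ≤ (‖H‖ * (2 * ‖θ₁ - θ‖) * ‖H‖) * γmin⁻¹ := by
              refine mul_le_mul ?_ hnA₂ (norm_nonneg _) (by positivity)
              calc ‖H * (Iplus θ - θ₁) * Hᵀ‖
                  ≤ ‖H * (Iplus θ - θ₁)‖ * ‖Hᵀ‖ := Matrix.l2_opNorm_mul _ _
                _ ≤ (‖H‖ * (2 * ‖θ₁ - θ‖)) * ‖H‖ := by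
                    rw [norm_transpose]
                    refine mul_le_mul ?_ le_rfl (norm_nonneg _) (by positivity)
                    refine le_trans (Matrix.l2_opNorm_mul _ _) ?_
                    exact mul_le_mul le_rfl hnIp (norm_nonneg _) (norm_nonneg _)
          _ = ‖H‖ * (2 * ‖θ₁ - θ‖) * ‖H‖ * γmin⁻¹ := by ring
      calc ‖θ₁ * Hᵀ * (A₁⁻¹ * ((H * (Iplus θ - θ₁) * Hᵀ) * A₂⁻¹))‖
          ≤ ‖θ₁ * Hᵀ‖ * ‖A₁⁻¹ * ((H * (Iplus θ - θ₁) * Hᵀ) * A₂⁻¹)‖ :=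
            Matrix.l2_opNorm_mul _ _
        _ ≤ (‖θ₁‖ * ‖Hᵀ‖) * (γmin⁻¹ * (‖H‖ * (2 * ‖θ₁ - θ‖) * ‖H‖ * γmin⁻¹)) := by
            refine mul_le_mul (Matrix.l2_opNorm_mul _ _) ?_ (norm_nonneg _) ?_
            · refine le_trans (Matrix.l2_opNorm_mul _ _) ?_
              exact mul_le_mul hnA₁ hmid (norm_nonneg _) hg
            · positivity
        _ = ‖θ₁‖ * ‖H‖ * (γmin⁻¹ * (‖H‖ * (2 * ‖θ₁ - θ‖) * ‖H‖ * γmin⁻¹)) := by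
            rw [norm_transpose]
  have ht2 : ‖Matrix.toEuclideanLin (K₁ - K₂) z‖
      ≤ (‖θ₁ - θ‖ * ‖H‖ * γmin⁻¹
        + ‖θ₁‖ * ‖H‖ * (γmin⁻¹ * (‖H‖ * (2 * ‖θ₁ - θ‖) * ‖H‖ * γmin⁻¹))) * ‖z‖ := by
    refine le_trans (norm_tel_le _ _) ?_
    exact mul_le_mul hnK le_rfl (norm_nonneg _) (by positivity)
  refine le_trans (norm_add_le _ _) (le_trans (add_le_add ht1 ht2) (le_of_eq ?_))
  field_simp

end Pointwise

section Prob

variable {Ω : Type*} [MeasurableSpace Ω] {μ : MeasureTheory.Measure Ω}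

lemma pNorm_eq_toReal {E : Type*} [NormedAddCommGroup E] {u : Ω → E} {q : ℝ} (hq : 0 < q)
    (hu : MemLp u (ENNReal.ofReal q) μ) :
    pNorm μ u q = (eLpNorm u (ENNReal.ofReal q) μ).toReal := by
  have hne : ENNReal.ofReal q ≠ 0 := fun h0 =>
    absurd (ENNReal.ofReal_eq_zero.mp h0) (not_le.mpr hq)
  rw [hu.eLpNorm_eq_integral_rpow_norm hne ENNReal.ofReal_ne_top,
    ENNReal.toReal_ofReal hq.le,
    ENNReal.toReal_ofReal (Real.rpow_nonneg (integral_nonneg fun a =>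
      Real.rpow_nonneg (norm_nonneg _) _) _), pNorm, one_div]

end Prob

end EnkfAux

open EnkfAux in
/-- **EnKF update-map Lipschitz bound** (key inequality in Lemma A.3). -/
theorem enkf_update_lipschitz_bound
    {Ω : Type*} [MeasurableSpace Ω] (μ : Measure Ω) [IsProbabilityMeasure μ]
    {d k : ℕ} (H : Matrix (Fin k) (Fin d) ℝ) (y : EuclideanSpace ℝ (Fin k))
    (Γ : Matrix (Fin k) (Fin k) ℝ) (hΓ : Γ.PosDef)
    (γmin : ℝ) (hγ : 0 < γmin) (hlb : ∀ i, γmin ≤ hΓ.1.eigenvalues i)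
    (hmem : ∃ i, hΓ.1.eigenvalues i = γmin)
    (ξ : Ω → EuclideanSpace ℝ (Fin k))
    (θ₁ : Matrix (Fin d) (Fin d) ℝ) (hθ₁ : θ₁.PosSemidef)
    (θ₂ : Ω → Matrix (Fin d) (Fin d) ℝ) (hθ₂ : ∀ ω, (θ₂ ω).IsHermitian)
    (v₁ v₂ : Ω → EuclideanSpace ℝ (Fin d))
    (hξ : ∀ q : ℝ, 2 ≤ q → MemLp ξ (ENNReal.ofReal q) μ)
    (hθ₂m : ∀ q : ℝ, 2 ≤ q → MemLp θ₂ (ENNReal.ofReal q) μ)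
    (hv₁ : ∀ q : ℝ, 2 ≤ q → MemLp v₁ (ENNReal.ofReal q) μ)
    (hv₂ : ∀ q : ℝ, 2 ≤ q → MemLp v₂ (ENNReal.ofReal q) μ)
    (p : ℝ) (hp : 2 ≤ p) :
    pNorm μ (fun ω => enkfUpdate H Γ y (v₁ ω) θ₁ (ξ ω)
        - enkfUpdate H Γ y (v₂ ω) (θ₂ ω) (ξ ω)) p
      ≤ (1 + ‖H‖ ^ 2 * ‖θ₁‖ / γmin) * pNorm μ (fun ω => v₁ ω - v₂ ω) p
        + (‖H‖ / γmin + 2 * ‖H‖ ^ 3 * ‖θ₁‖ / γmin ^ 2)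
          * pNorm μ (fun ω => y - Matrix.toEuclideanLin H (v₂ ω)
              + Matrix.toEuclideanLin (matSqrt Γ) (ξ ω)) (2 * p)
          * pNorm μ (fun ω => θ₁ - θ₂ ω) (2 * p) := by
  have hp0 : 0 < p := by linarith
  have hp2 : (2:ℝ) ≤ 2 * p := by linarith
  have h2p0 : 0 < 2 * p := by linarith
  set C₁ := 1 + ‖H‖ ^ 2 * ‖θ₁‖ / γmin with hC₁def
  set C₂ := ‖H‖ / γmin + 2 * ‖H‖ ^ 3 * ‖θ₁‖ / γmin ^ 2 with hC₂def
  have hC₁0 : 0 ≤ C₁ := by rw [hC₁def]; positivity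
  have hC₂0 : 0 ≤ C₂ := by rw [hC₂def]; positivity
  set Δv := fun ω => v₁ ω - v₂ ω with hΔvdef
  set z := fun ω => y - Matrix.toEuclideanLin H (v₂ ω)
    + Matrix.toEuclideanLin (matSqrt Γ) (ξ ω) with hzdef
  set Δθ := fun ω => θ₁ - θ₂ ω with hΔθdef
  set h := fun ω => C₁ * ‖Δv ω‖ + C₂ * (‖Δθ ω‖ * ‖z ω‖) with hhdef
  have hh0 : ∀ ω, 0 ≤ h ω := fun ω => add_nonneg (mul_nonneg hC₁0 (norm_nonneg _))
    (mul_nonneg hC₂0 (mul_nonneg (norm_nonneg _) (norm_nonneg _)))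
  -- MemLp facts
  have hΔvm : MemLp Δv (ENNReal.ofReal p) μ := (hv₁ p hp).sub (hv₂ p hp)
  have hzm : MemLp z (ENNReal.ofReal (2*p)) μ := by
    refine ((memLp_const y).sub ?_).add ?_
    · exact (LinearMap.toContinuousLinearMap (Matrix.toEuclideanLin H)).comp_memLp'
        (hv₂ _ hp2)
    · exact (LinearMap.toContinuousLinearMap
        (Matrix.toEuclideanLin (matSqrt Γ))).comp_memLp' (hξ _ hp2)
  have hΔθm : MemLp Δθ (ENNReal.ofReal (2*p)) μ := (memLp_const θ₁).sub (hθ₂m _ hp2)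
  -- exponent arithmetic
  have hpq : 1 / (ENNReal.ofReal p)
      = 1 / (ENNReal.ofReal (2*p)) + 1 / (ENNReal.ofReal (2*p)) := by
    have h2 := ENNReal.mul_div_mul_left (c := (2 : ENNReal)) 1 (ENNReal.ofReal p)
      two_ne_zero ENNReal.ofNat_ne_top
    rw [mul_one] at h2
    rw [ENNReal.div_add_div_same, one_add_one_eq_two,
      ENNReal.ofReal_mul (by norm_num : (0:ℝ) ≤ 2), ENNReal.ofReal_ofNat]
    exact h2.symm
  have hT : ENNReal.HolderTriple (ENNReal.ofReal (2*p)) (ENNReal.ofReal (2*p))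
      (ENNReal.ofReal p) := ⟨by simpa only [one_div] using hpq.symm⟩
  have hprodm : MemLp (fun ω => ‖Δθ ω‖ * ‖z ω‖) (ENNReal.ofReal p) μ :=
    MemLp.smul hzm.norm hΔθm.norm
  have hhm : MemLp h (ENNReal.ofReal p) μ := (hΔvm.norm.const_smul C₁).add
    (hprodm.const_smul C₂)
  -- pointwise bound
  have hpt : ∀ ω, ‖enkfUpdate H Γ y (v₁ ω) θ₁ (ξ ω) - enkfUpdate H Γ y (v₂ ω) (θ₂ ω) (ξ ω)‖
      ≤ h ω := fun ω => by
    refine le_trans (enkf_pointwise H hΓ hγ hlb y hθ₁ (hθ₂ ω) (v₁ ω) (v₂ ω) (ξ ω))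
      (le_of_eq ?_)
    rw [hhdef, hC₁def, hC₂def]
    ring
  -- integrability of ‖h‖^p
  have hIntN : Integrable (fun ω => ‖h ω‖ ^ p) μ := by
    have h3 := hhm.integrable_norm_rpow (fun h0 =>
      absurd (ENNReal.ofReal_eq_zero.mp h0) (not_le.mpr hp0)) ENNReal.ofReal_ne_top
    simpa [ENNReal.toReal_ofReal hp0.le] using h3
  -- step 1
  have step1 : pNorm μ (fun ω => enkfUpdate H Γ y (v₁ ω) θ₁ (ξ ω)
      - enkfUpdate H Γ y (v₂ ω) (θ₂ ω) (ξ ω)) p ≤ pNorm μ h p := by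
    rw [pNorm, pNorm]
    refine Real.rpow_le_rpow (integral_nonneg fun ω => ?_) ?_ (by positivity)
    · positivity
    refine integral_mono_of_nonneg (Filter.Eventually.of_forall fun ω => by positivity)
      hIntN (Filter.Eventually.of_forall fun ω => ?_)
    refine Real.rpow_le_rpow (norm_nonneg _) ?_ hp0.le
    exact le_trans (hpt ω) (le_trans (le_abs_self _) (le_of_eq (Real.norm_eq_abs _).symm))
  -- step 2 : eLpNorm estimates
  have hone : (1:ENNReal) ≤ ENNReal.ofReal p := ENNReal.one_le_ofReal.mpr (by linarith)
  have e1 : eLpNorm h (ENNReal.ofReal p) μ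
      ≤ ↑‖C₁‖₊ * eLpNorm Δv (ENNReal.ofReal p) μ
        + ↑‖C₂‖₊ * (eLpNorm Δθ (ENNReal.ofReal (2*p)) μ
          * eLpNorm z (ENNReal.ofReal (2*p)) μ) := by
    calc eLpNorm h (ENNReal.ofReal p) μ
        ≤ eLpNorm (fun ω => C₁ • ‖Δv ω‖) (ENNReal.ofReal p) μ
          + eLpNorm (fun ω => C₂ • (‖Δθ ω‖ * ‖z ω‖)) (ENNReal.ofReal p) μ :=
          eLpNorm_add_le ((hΔvm.norm.const_smul C₁).aestronglyMeasurable)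
            ((hprodm.const_smul C₂).aestronglyMeasurable) hone
      _ = ↑‖C₁‖₊ * eLpNorm (fun ω => ‖Δv ω‖) (ENNReal.ofReal p) μ
          + ↑‖C₂‖₊ * eLpNorm (fun ω => ‖Δθ ω‖ * ‖z ω‖) (ENNReal.ofReal p) μ := by
          rw [show (fun ω => C₁ • ‖Δv ω‖) = C₁ • (fun ω => ‖Δv ω‖) from rfl,
            show (fun ω => C₂ • (‖Δθ ω‖ * ‖z ω‖)) = C₂ • (fun ω => ‖Δθ ω‖ * ‖z ω‖) from rfl,
            eLpNorm_const_smul, eLpNorm_const_smul, enorm_eq_nnnorm, enorm_eq_nnnorm]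
      _ ≤ ↑‖C₁‖₊ * eLpNorm Δv (ENNReal.ofReal p) μ
          + ↑‖C₂‖₊ * (eLpNorm Δθ (ENNReal.ofReal (2*p)) μ
            * eLpNorm z (ENNReal.ofReal (2*p)) μ) := by
          rw [eLpNorm_norm]
          refine add_le_add le_rfl (mul_le_mul_right ?_ _)
          have hH := eLpNorm_le_eLpNorm_mul_eLpNorm'_of_norm (p := ENNReal.ofReal (2*p))
            (q := ENNReal.ofReal (2*p)) (r := ENNReal.ofReal p)
            (hΔθm.norm.aestronglyMeasurable) (hzm.norm.aestronglyMeasurable)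
            (fun (a : ℝ) (b : ℝ) => a * b) 1
            (Filter.Eventually.of_forall fun ω => by
              simp [abs_mul, abs_of_nonneg (norm_nonneg _)])
          rw [eLpNorm_norm, eLpNorm_norm, ENNReal.coe_one, one_mul] at hH
          exact hH
  have hfin1 : ↑‖C₁‖₊ * eLpNorm Δv (ENNReal.ofReal p) μ ≠ ⊤ :=
    ENNReal.mul_ne_top ENNReal.coe_ne_top hΔvm.eLpNorm_ne_top
  have hfin2 : ↑‖C₂‖₊ * (eLpNorm Δθ (ENNReal.ofReal (2*p)) μ
      * eLpNorm z (ENNReal.ofReal (2*p)) μ) ≠ ⊤ :=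
    ENNReal.mul_ne_top ENNReal.coe_ne_top
      (ENNReal.mul_ne_top hΔθm.eLpNorm_ne_top hzm.eLpNorm_ne_top)
  have step2 : pNorm μ h p ≤ C₁ * pNorm μ Δv p
      + C₂ * (pNorm μ Δθ (2*p) * pNorm μ z (2*p)) := by
    rw [pNorm_eq_toReal hp0 hhm, pNorm_eq_toReal hp0 hΔvm, pNorm_eq_toReal h2p0 hΔθm,
      pNorm_eq_toReal h2p0 hzm]
    have h4 := ENNReal.toReal_mono (ENNReal.add_ne_top.mpr ⟨hfin1, hfin2⟩) e1
    rw [ENNReal.toReal_add hfin1 hfin2, ENNReal.toReal_mul, ENNReal.toReal_mul,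
      ENNReal.toReal_mul, ENNReal.coe_toReal, ENNReal.coe_toReal, coe_nnnorm, coe_nnnorm,
      Real.norm_eq_abs, Real.norm_eq_abs, abs_of_nonneg hC₁0, abs_of_nonneg hC₂0] at h4
    exact h4
  refine le_trans (le_trans step1 step2) (le_of_eq ?_)
  ring
end
end
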